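/- arXiv:math/0702239 — 2 statements merged into one kernel-verified Lean document; each statement's English description precedes it below -/
import Mathlib

section
/- Let $V = (v_1,\dots,v_n)$ and $V' = (v'_1,\dots,v'_n)$ be finite families of vectors each spanning $\mathbb{R}^d$, and set $Q = \sum_{i=1}^n v_i v_i^t$ and $Q' = \sum_{i=1}^n v'_i (v'_i)^t$ (both positive definite, hence invertible). Then for any permutation $\sigma \in \mathrm{Sym}(n)$, there exists $A \in GL_d(\mathbb{R})$ with $A v_i = v'_{\sigma(i)}$ for all $i$ if and only if $v_i^t Q^{-1} v_j = (v'_{\sigma(i)})^t (Q')^{-1} v'_{\sigma(j)}$ for all $i,j \in \{1,\dots,n\}$. -/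
/-!
Under `x ↦ A x` the frame matrix `Q = ∑ vᵢ vᵢᵗ` becomes `A Q Aᵗ`, so the colours `vᵢᵗ Q⁻¹ vⱼ` are
invariants of a restricted isomorphism. Conversely, when the colours agree,
`A := (∑ v'_{σ i} vᵢᵗ) Q⁻¹` sends `vⱼ` to `∑ᵢ (v'_{σ i}ᵗ Q'⁻¹ v'_{σ j}) v'_{σ i} = Q' Q'⁻¹ v'_{σ j}`,
and it is invertible because its range contains the spanning family `v'`.
-/

open Matrix

namespace Matrix

variable {R K ι m : Type*} [Fintype ι]

def frameMatrix [CommRing R] (v : ι → m → R) : Matrix m m R :=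
  ∑ i, vecMulVec (v i) (v i)

section CommRing

variable [CommRing R]

theorem frameMatrix_comp_equiv (v : ι → m → R) (σ : Equiv.Perm ι) :
    frameMatrix (v ∘ σ) = frameMatrix v :=
  Equiv.sum_comp σ fun i => vecMulVec (v i) (v i)

variable [Fintype m]

theorem sum_vecMulVec_mulVec (u w : ι → m → R) (x : m → R) :
    (∑ i, vecMulVec (u i) (w i)) *ᵥ x = ∑ i, (w i ⬝ᵥ x) • u i := by
  simp only [sum_mulVec, vecMulVec_mulVec, op_smul_eq_smul]

theorem frameMatrix_mulVec (A : Matrix m m R) (v : ι → m → R) :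
    frameMatrix (fun i => A *ᵥ v i) = A * frameMatrix v * Aᵀ := by
  simp only [frameMatrix, Finset.mul_sum, Finset.sum_mul, mul_vecMulVec, vecMulVec_mul,
    vecMul_transpose]

variable [DecidableEq m]

theorem sum_dotProduct_frameMatrix_inv_mulVec_smul (v : ι → m → R)
    (hv : IsUnit (frameMatrix v)) (x : m → R) :
    ∑ i, (v i ⬝ᵥ (frameMatrix v)⁻¹ *ᵥ x) • v i = x := by
  rw [← sum_vecMulVec_mulVec, ← frameMatrix, mulVec_mulVec,
    mul_nonsing_inv _ ((isUnit_iff_isUnit_det _).mp hv), one_mulVec]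

theorem mulVec_dotProduct_inv_conj_mulVec {A : Matrix m m R} (hA : IsUnit A) (Q : Matrix m m R)
    (x y : m → R) : (A *ᵥ x) ⬝ᵥ (A * Q * Aᵀ)⁻¹ *ᵥ (A *ᵥ y) = x ⬝ᵥ Q⁻¹ *ᵥ y := by
  rw [mul_inv_rev, mul_inv_rev, mulVec_mulVec, ← mul_assoc,
    nonsing_inv_mul_cancel_right _ _ ((isUnit_iff_isUnit_det A).mp hA), ← mulVec_mulVec,
    dotProduct_mulVec, ← vecMul_transpose, vecMul_vecMul,
    mul_nonsing_inv _ ((isUnit_iff_isUnit_det _).mp ((isUnit_transpose A).mpr hA)), vecMul_one]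

theorem dotProduct_frameMatrix_inv_mulVec_map {A : Matrix m m R} (hA : IsUnit A)
    (v : ι → m → R) (i j : ι) :
    (A *ᵥ v i) ⬝ᵥ (frameMatrix fun k => A *ᵥ v k)⁻¹ *ᵥ (A *ᵥ v j)
      = v i ⬝ᵥ (frameMatrix v)⁻¹ *ᵥ v j := by
  rw [frameMatrix_mulVec, mulVec_dotProduct_inv_conj_mulVec hA]

end CommRing

section LinearOrderedField

variable [Field K] [LinearOrder K] [IsStrictOrderedRing K] [Fintype m] [DecidableEq m]

theorem isUnit_frameMatrix {v : ι → m → K} (hv : Submodule.span K (Set.range v) = ⊤) :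
    IsUnit (frameMatrix v) := by
  refine mulVec_injective_iff_isUnit.mp <|
    (injective_iff_map_eq_zero (frameMatrix v).mulVecLin).mpr fun x hx => ?_
  have hsq : ∑ i, (v i ⬝ᵥ x) ^ 2 = 0 := by
    rw [← dotProduct_zero x, ← show frameMatrix v *ᵥ x = 0 from hx, frameMatrix,
      sum_vecMulVec_mulVec, dotProduct_sum]
    simp only [smul_dotProduct, smul_eq_mul, sq, dotProduct_comm x]
  have horth : ∀ i, v i ⬝ᵥ x = 0 := fun i =>
    pow_eq_zero_iff two_ne_zero |>.mp <|
      (Finset.sum_eq_zero_iff_of_nonneg fun _ _ => sq_nonneg _).mp hsq i (Finset.mem_univ i)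
  have hx0 : dotProductEquiv K m x = 0 :=
    LinearMap.ext_on_range hv fun i => by simpa [dotProduct_comm x] using horth i
  exact dotProduct_self_eq_zero.mp (LinearMap.congr_fun hx0 x)

theorem exists_isUnit_mulVec_eq_of_dotProduct_inv_eq {v w : ι → m → K}
    (hw : Submodule.span K (Set.range w) = ⊤)
    (hvw : ∀ i j, v i ⬝ᵥ (frameMatrix v)⁻¹ *ᵥ v j = w i ⬝ᵥ (frameMatrix w)⁻¹ *ᵥ w j) :
    ∃ A : Matrix m m K, IsUnit A ∧ ∀ i, A *ᵥ v i = w i := by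
  set A := (∑ i, vecMulVec (w i) (v i)) * (frameMatrix v)⁻¹
  have hAv : ∀ j, A *ᵥ v j = w j := fun j => by
    rw [← mulVec_mulVec, sum_vecMulVec_mulVec]
    simp_rw [hvw _ j]
    exact sum_dotProduct_frameMatrix_inv_mulVec_smul w (isUnit_frameMatrix hw) (w j)
  have hrange : Submodule.span K (Set.range w) ≤ LinearMap.range A.mulVecLin :=
    Submodule.span_le.mpr (Set.range_subset_iff.mpr fun j => ⟨v j, hAv j⟩)
  refine ⟨A, mulVec_surjective_iff_isUnit.mp ?_, hAv⟩
  exact LinearMap.range_eq_top.mp (top_unique (hw ▸ hrange))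

theorem exists_isUnit_mulVec_eq_iff {v w : ι → m → K} (hw : Submodule.span K (Set.range w) = ⊤) :
    (∃ A : Matrix m m K, IsUnit A ∧ ∀ i, A *ᵥ v i = w i) ↔
      ∀ i j, v i ⬝ᵥ (frameMatrix v)⁻¹ *ᵥ v j = w i ⬝ᵥ (frameMatrix w)⁻¹ *ᵥ w j := by
  refine ⟨?_, exists_isUnit_mulVec_eq_of_dotProduct_inv_eq hw⟩
  rintro ⟨A, hA, hAv⟩ i j
  obtain rfl : w = fun k => A *ᵥ v k := funext fun k => (hAv k).symm
  exact (dotProduct_frameMatrix_inv_mulVec_map hA v i j).symm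

end LinearOrderedField

end Matrix

theorem stmt_4_general (d n : ℕ) (v v' : Fin n → (Fin d → ℝ))
    (hspan' : Submodule.span ℝ (Set.range v') = ⊤)
    (Q Q' : Matrix (Fin d) (Fin d) ℝ)
    (hQ : Q = ∑ i : Fin n, Matrix.vecMulVec (v i) (v i))
    (hQ' : Q' = ∑ i : Fin n, Matrix.vecMulVec (v' i) (v' i))
    (σ : Equiv.Perm (Fin n)) :
    (∃ A : Matrix (Fin d) (Fin d) ℝ, IsUnit A ∧
        ∀ i, A.mulVec (v i) = v' (σ i)) ↔
      (∀ i j, dotProduct (v i) (Q⁻¹.mulVec (v j))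
        = dotProduct (v' (σ i)) (Q'⁻¹.mulVec (v' (σ j)))) := by
  obtain rfl : Q' = frameMatrix (v' ∘ σ) := hQ'.trans (frameMatrix_comp_equiv v' σ).symm
  subst hQ
  exact exists_isUnit_mulVec_eq_iff (w := v' ∘ σ) (by rwa [EquivLike.range_comp])

/-- For spanning vector families `v`, `v'` in `ℝ^d` with associated
positive definite matrices `Q = ∑ vᵢvᵢᵗ` and `Q' = ∑ v'ᵢv'ᵢᵗ`, and a permutation
`σ`, there is an invertible matrix `A` with `A vᵢ = v'_{σ(i)}` for all `i` iff
the edge colours agree: `vᵢᵗ Q⁻¹ vⱼ = v'_{σ(i)}ᵗ Q'⁻¹ v'_{σ(j)}` for all `i, j`. -/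
theorem stmt_4 (d n : ℕ) (v v' : Fin n → (Fin d → ℝ))
    (hspan : Submodule.span ℝ (Set.range v) = ⊤)
    (hspan' : Submodule.span ℝ (Set.range v') = ⊤)
    (Q Q' : Matrix (Fin d) (Fin d) ℝ)
    (hQ : Q = ∑ i : Fin n, Matrix.vecMulVec (v i) (v i))
    (hQ' : Q' = ∑ i : Fin n, Matrix.vecMulVec (v' i) (v' i))
    (σ : Equiv.Perm (Fin n)) :
    (∃ A : Matrix (Fin d) (Fin d) ℝ, IsUnit A ∧
        ∀ i, A.mulVec (v i) = v' (σ i)) ↔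
      (∀ i j, dotProduct (v i) (Q⁻¹.mulVec (v j))
        = dotProduct (v' (σ i)) (Q'⁻¹.mulVec (v' (σ j)))) :=
  stmt_4_general d n v v' hspan' Q Q' hQ hQ' σ
end

section
/- Let $v_1,\dots,v_n \in \mathbb{R}^d$ with $d \leq n$ such that $(v_1,\dots,v_d)$ is a basis of $\mathbb{R}^d$. Define $v'_1,\dots,v'_n \in \mathbb{R}^n = \mathbb{R}^d \times \mathbb{R}^{n-d}$ by $v'_i = (v_i, 0)$ for $i \leq d$ and $v'_i = (v_i, 0) + e_i$ for $i > d$, where $e_i$ denotes the $i$-th standard basis vector of $\mathbb{R}^n$. Then (a) the family $(v'_1,\dots,v'_n)$ is linearly independent (so the cone $\mathcal{P}' = \mathrm{cone}\{v'_1,\dots,v'_n\}$ is simplicial), and (b) the image of $\mathcal{P}'$ under the orthogonal projection $p_d : \mathbb{R}^n \to \mathbb{R}^d$ onto the first $d$ coordinates equals $\mathcal{P} = \mathrm{cone}\{v_1,\dots,v_n\}$. -/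
/-- The polyhedral cone generated by a finite family of vectors. -/
def polyCone {d n : ℕ} (v : Fin n → (Fin d → ℝ)) : Set (Fin d → ℝ) :=
  {x | ∃ lam : Fin n → ℝ, (∀ i, 0 ≤ lam i) ∧ x = ∑ i, lam i • v i}

/-- Embedding `ℝ^d → ℝ^n = ℝ^d × ℝ^(n-d)` (zero on the last `n - d` coordinates). -/
def embFirst {d n : ℕ} (h : d ≤ n) (x : Fin d → ℝ) : Fin n → ℝ :=
  fun j => if hj : (j : ℕ) < d then x ⟨j, hj⟩ else 0

lemma sum_low {M : Type*} [AddCommMonoid M] {d n : ℕ} (hdn : d ≤ n) (f : Fin n → M)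
    (hf : ∀ k : Fin n, d ≤ (k : ℕ) → f k = 0) :
    ∑ k, f k = ∑ j : Fin d, f (Fin.castLE hdn j) := by
  have h2 : ∑ j : Fin d, f (Fin.castLE hdn j)
      = ∑ k ∈ Finset.univ.map (Fin.castLEEmb hdn), f k := by
    rw [Finset.sum_map]; rfl
  rw [h2]
  refine (Finset.sum_subset (Finset.subset_univ _) ?_).symm
  intro x _ hx
  apply hf
  by_contra h
  push_neg at h
  exact hx (Finset.mem_map.2 ⟨⟨x, h⟩, Finset.mem_univ _, by simp [Fin.castLEEmb]⟩)

/-- Given `v₁, …, vₙ ∈ ℝ^d` whose first `d` members form a basis of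
`ℝ^d`, the lifted vectors `v'ᵢ = (vᵢ, 0)` for `i ≤ d` and `v'ᵢ = (vᵢ, 0) + eᵢ` for
`i > d` are linearly independent (so `cone{v'₁, …, v'ₙ}` is simplicial), and the
orthogonal projection onto the first `d` coordinates maps `cone{v'₁, …, v'ₙ}`
onto `cone{v₁, …, vₙ}`. -/
theorem stmt_7 (d n : ℕ) (hdn : d ≤ n) (v : Fin n → (Fin d → ℝ))
    (hbasis_indep : LinearIndependent ℝ (fun i : Fin d => v (Fin.castLE hdn i)))
    (hbasis_span :
      Submodule.span ℝ (Set.range (fun i : Fin d => v (Fin.castLE hdn i))) = ⊤)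
    (v' : Fin n → (Fin n → ℝ))
    (hv' : ∀ i, v' i =
      embFirst hdn (v i) + (if d ≤ (i : ℕ) then Pi.single i (1 : ℝ) else 0)) :
    LinearIndependent ℝ v' ∧
      (fun x : Fin n → ℝ => fun j : Fin d => x (Fin.castLE hdn j)) '' polyCone v'
        = polyCone v := by
  have hproj : ∀ i j, v' i (Fin.castLE hdn j) = v i j := by
    intro i j
    have hlt : ((Fin.castLE hdn j : Fin n) : ℕ) < d := j.isLt
    rw [hv']
    simp only [Pi.add_apply, embFirst, dif_pos hlt]
    have h1 : (⟨((Fin.castLE hdn j : Fin n) : ℕ), hlt⟩ : Fin d) = j := rfl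
    rw [h1]
    split_ifs with hd
    · rw [Pi.single_apply, if_neg (by
        intro he
        have : ((Fin.castLE hdn j : Fin n) : ℕ) = (i : ℕ) := by rw [he]
        omega), add_zero]
    · simp
  have hhigh : ∀ (i k : Fin n), d ≤ (k : ℕ) → v' i k = if i = k then 1 else 0 := by
    intro i k hk
    rw [hv']
    simp only [Pi.add_apply, embFirst, dif_neg (by omega : ¬ (k : ℕ) < d), zero_add]
    split_ifs with hd hik hik
    · simp [Pi.single_apply, hik]
    · rw [Pi.single_apply, if_neg (fun h => hik h.symm)]
    · exact absurd (hik ▸ hk) hd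
    · rfl
  constructor
  · rw [Fintype.linearIndependent_iff]
    intro g hg
    have hgh : ∀ k : Fin n, d ≤ (k : ℕ) → g k = 0 := by
      intro k hk
      have h1 := congrFun hg k
      simp only [Finset.sum_apply, Pi.smul_apply, smul_eq_mul, Pi.zero_apply] at h1
      rw [Finset.sum_eq_single k (fun i _ hik => by
            rw [hhigh i k hk, if_neg hik, mul_zero])
          (fun h => absurd (Finset.mem_univ k) h)] at h1
      rw [hhigh k k hk, if_pos rfl, mul_one] at h1
      exact h1
    have hsum : ∑ j : Fin d, g (Fin.castLE hdn j) • v (Fin.castLE hdn j) = 0 := by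
      rw [← sum_low hdn (fun k => g k • v k) (fun k hk => by simp [hgh k hk])]
      funext j
      have h1 := congrFun hg (Fin.castLE hdn j)
      simp only [Finset.sum_apply, Pi.smul_apply, smul_eq_mul, Pi.zero_apply] at h1 ⊢
      rw [← h1]
      exact Finset.sum_congr rfl fun i _ => by rw [hproj]
    have hlow := Fintype.linearIndependent_iff.1 hbasis_indep
      (fun j => g (Fin.castLE hdn j)) hsum
    intro i
    by_cases hi : d ≤ (i : ℕ)
    · exact hgh i hi
    · exact hlow ⟨i, by omega⟩
  · ext x
    constructor
    · rintro ⟨y, ⟨lam, hlam, rfl⟩, rfl⟩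
      refine ⟨lam, hlam, ?_⟩
      funext j
      simp only [Finset.sum_apply, Pi.smul_apply, smul_eq_mul]
      exact Finset.sum_congr rfl fun i _ => by rw [hproj]
    · rintro ⟨lam, hlam, rfl⟩
      refine ⟨∑ i, lam i • v' i, ⟨lam, hlam, rfl⟩, ?_⟩
      funext j
      simp only [Finset.sum_apply, Pi.smul_apply, smul_eq_mul]
      exact Finset.sum_congr rfl fun i _ => by rw [hproj]
end
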